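/- Let λ_{2k}^1 = -(1/π) ∫_0^1 arccos²(t) C_{2k}(t) (1-t²)^{-1/2} dt, where C_{2k} is the Chebyshev polynomial of the first kind of degree 2k. Then the sequence (λ_{2k}^1)_{k≥1} has alternating signs, and |λ_{2k}^1| = Θ(k^{-2}) as k → ∞. -/

import Mathlib

/-! Substituting `t = cos θ` turns `λ_{2k}^1` into `-(1/π) ∫_0^{π/2} θ² cos(2kθ) dθ`, because
`C_{2k}(cos θ) = cos(2kθ)` and `dt / √(1 - t²) = -dθ`. Two integrations by parts evaluate this
integral to `π (-1)^k / (4k²)`, so `λ_{2k}^1 = (-1)^{k+1} / (4k²)` for `k ≥ 1`. -/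

open MeasureTheory Real

noncomputable section

/-- The sphere `S^n` of radius one in `ℝ^{n+1}`. -/
abbrev unitSphere (n : ℕ) := Metric.sphere (0 : EuclideanSpace ℝ (Fin (n + 1))) 1

/-- The (n-dimensional) volume of the round sphere `S^n ⊂ ℝ^{n+1}`. -/
def sphereVolume (n : ℕ) : ℝ := 2 * π ^ (((n : ℝ) + 1) / 2) / Real.Gamma (((n : ℝ) + 1) / 2)

/-- The constant `σ_n = -vol(S^{n-1})/vol(S^n)`. -/
def sigmaMDS (n : ℕ) : ℝ :=
  -(2 * π ^ ((n : ℝ) / 2) / Real.Gamma ((n : ℝ) / 2)) / sphereVolume n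

/-- The Rodrigues constant `R_{2k}^n = 4^{-k} Γ(n/2)/Γ(n/2+2k)`. -/
def rodriguesR (n k : ℕ) : ℝ :=
  (1 / 4 ^ k) * Real.Gamma ((n : ℝ) / 2) / Real.Gamma ((n : ℝ) / 2 + 2 * k)

/-- `F_{2k}^n(t) = P_{2k}^n(t)(1-t²)^{(n-2)/2}
  = R_{2k}^n (d/dt)^{2k} (1-t²)^{2k+(n-2)/2}` (Rodrigues formula), where `P_{2k}^n` is the
degree-`2k` Legendre polynomial for `S^n`. -/
def legendreF (n k : ℕ) (t : ℝ) : ℝ :=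
  rodriguesR n k *
    iteratedDeriv (2 * k) (fun s : ℝ => (1 - s ^ 2) ^ (2 * (k : ℝ) + ((n : ℝ) - 2) / 2)) t

/-- The eigenvalue `λ_{2k}^n = σ_n ∫_0^1 arccos²(t) P_{2k}^n(t)(1-t²)^{(n-2)/2} dt` of the MDS
integral operator on `ℝP^n` on degree-`2k` spherical harmonics. -/
def lamRP (n k : ℕ) : ℝ :=
  sigmaMDS n * ∫ t in (0 : ℝ)..1, Real.arccos t ^ 2 * legendreF n k t

/-- `φ : S^n → ℝ` is a spherical harmonic of degree `k`: the restriction to the sphere of a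
smooth function on `ℝ^{n+1}` which is homogeneous of degree `k` and harmonic. -/
def IsSphericalHarmonic (n k : ℕ) (φ : unitSphere n → ℝ) : Prop :=
  ∃ p : EuclideanSpace ℝ (Fin (n + 1)) → ℝ, ContDiff ℝ ⊤ p ∧
    (∀ (r : ℝ) (x), p (r • x) = r ^ k * p x) ∧
    (∀ x, ∑ i, fderiv ℝ (fun y => fderiv ℝ p y (EuclideanSpace.single i 1)) x
        (EuclideanSpace.single i 1) = 0) ∧
    ∀ x : unitSphere n, φ x = p (x : EuclideanSpace ℝ (Fin (n + 1)))

end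

open Asymptotics Filter

/-- The circle eigenvalues `λ_{2k}^1 = -(1/π) ∫_0^1 arccos²(t) C_{2k}(t)(1-t²)^{-1/2} dt`,
where `C_{2k}` is the Chebyshev polynomial of the first kind of degree `2k`. -/
noncomputable def lamCircle (k : ℕ) : ℝ :=
  -(1 / π) * ∫ t in (0 : ℝ)..1,
    Real.arccos t ^ 2 * (Polynomial.Chebyshev.T ℝ (2 * k)).eval t * (1 - t ^ 2) ^ (-(1:ℝ)/2)

theorem arccos_image_Ioo_zero_one : arccos '' Set.Ioo 0 1 = Set.Ioo 0 (π / 2) := by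
  ext θ
  constructor
  · rintro ⟨t, ⟨ht0, ht1⟩, rfl⟩
    exact ⟨arccos_pos.2 ht1, arccos_lt_pi_div_two.2 ht0⟩
  · rintro ⟨hθ0, hθ1⟩
    have hθ : arccos (cos θ) = θ := arccos_cos hθ0.le (by linarith [pi_pos])
    exact ⟨cos θ, ⟨arccos_lt_pi_div_two.1 (by rwa [hθ]), arccos_pos.1 (by rwa [hθ])⟩, hθ⟩

theorem integral_comp_arccos_div_sqrt (f : ℝ → ℝ) :
    ∫ t in (0 : ℝ)..1, f (arccos t) / √(1 - t ^ 2) = ∫ θ in (0 : ℝ)..(π / 2), f θ := by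
  have hderiv : ∀ t ∈ Set.Ioo (0 : ℝ) 1,
      HasDerivWithinAt arccos (-(1 / √(1 - t ^ 2))) (Set.Ioo 0 1) t := fun t ht =>
    (hasDerivAt_arccos (by linarith [ht.1]) ht.2.ne).hasDerivWithinAt
  have hinj : Set.InjOn arccos (Set.Ioo (0 : ℝ) 1) :=
    strictAntiOn_arccos.injOn.mono
      (Set.Ioo_subset_Icc_self.trans (Set.Icc_subset_Icc (by norm_num) le_rfl))
  have := integral_image_eq_integral_abs_deriv_smul measurableSet_Ioo hderiv hinj f
  rw [arccos_image_Ioo_zero_one] at this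
  rw [intervalIntegral.integral_of_le zero_le_one,
    intervalIntegral.integral_of_le (by positivity), integral_Ioc_eq_integral_Ioo,
    integral_Ioc_eq_integral_Ioo, this]
  refine setIntegral_congr_fun measurableSet_Ioo fun t _ => ?_
  simp only [abs_neg, abs_div, abs_one, abs_of_nonneg (sqrt_nonneg _), smul_eq_mul]
  ring

theorem hasDerivAt_sq_mul_cos_antideriv {a : ℝ} (ha : a ≠ 0) (θ : ℝ) :
    HasDerivAt (fun θ => θ ^ 2 * sin (a * θ) / a + 2 * θ * cos (a * θ) / a ^ 2
      - 2 * sin (a * θ) / a ^ 3) (θ ^ 2 * cos (a * θ)) θ := by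
  have hlin : HasDerivAt (fun θ : ℝ => a * θ) a θ := by
    simpa using (hasDerivAt_id θ).const_mul a
  have hs := (hasDerivAt_sin (a * θ)).comp θ hlin
  have hc := (hasDerivAt_cos (a * θ)).comp θ hlin
  have := ((((hasDerivAt_pow 2 θ).mul hs).div_const a).add
    ((((hasDerivAt_id θ).const_mul 2).mul hc).div_const (a ^ 2))).sub
    ((hs.const_mul 2).div_const (a ^ 3))
  refine this.congr_deriv ?_
  simp only [Function.comp_apply, id_eq]
  field_simp
  ring

theorem integral_sq_mul_cos {a : ℝ} (ha : a ≠ 0) (b : ℝ) :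
    ∫ θ in (0 : ℝ)..b, θ ^ 2 * cos (a * θ) =
      b ^ 2 * sin (a * b) / a + 2 * b * cos (a * b) / a ^ 2 - 2 * sin (a * b) / a ^ 3 := by
  have hcont : Continuous fun θ : ℝ => θ ^ 2 * cos (a * θ) := by fun_prop
  rw [intervalIntegral.integral_eq_sub_of_hasDerivAt
    (fun θ _ => hasDerivAt_sq_mul_cos_antideriv ha θ) (hcont.intervalIntegrable _ _)]
  simp

theorem lamCircle_eq {k : ℕ} (hk : k ≠ 0) : lamCircle k = (-1) ^ (k + 1) / (4 * (k : ℝ) ^ 2) := by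
  have hsub : ∀ t ∈ Set.uIcc (0 : ℝ) 1,
      arccos t ^ 2 * (Polynomial.Chebyshev.T ℝ (2 * k)).eval t * (1 - t ^ 2) ^ (-(1 : ℝ) / 2) =
        arccos t ^ 2 * cos (2 * k * arccos t) / √(1 - t ^ 2) := by
    intro t ht
    rw [Set.uIcc_of_le zero_le_one] at ht
    have hT : (Polynomial.Chebyshev.T ℝ (2 * k)).eval t = cos (2 * k * arccos t) := by
      conv_lhs => rw [← cos_arccos (by linarith [ht.1]) ht.2]
      simp [Polynomial.Chebyshev.T_real_cos]
    rw [hT, neg_div, rpow_neg (by nlinarith [ht.1, ht.2]), ← sqrt_eq_rpow, div_eq_mul_inv]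
  have hk' : (2 * k : ℝ) ≠ 0 := by positivity
  rw [lamCircle, intervalIntegral.integral_congr hsub,
    integral_comp_arccos_div_sqrt (fun θ => θ ^ 2 * cos (2 * k * θ)), integral_sq_mul_cos hk',
    show (2 * k : ℝ) * (π / 2) = k * π by ring, sin_nat_mul_pi, cos_nat_mul_pi]
  field_simp
  ring

theorem abs_lamCircle {k : ℕ} (hk : k ≠ 0) : |lamCircle k| = 1 / 4 * (k : ℝ) ^ (-2 : ℝ) := by
  rw [lamCircle_eq hk, abs_div, abs_pow, abs_neg, abs_one, one_pow, rpow_neg (by positivity),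
    rpow_two, abs_of_pos (by positivity)]
  ring

theorem lamCircle_mul_lamCircle_succ {k : ℕ} (hk : k ≠ 0) :
    lamCircle k * lamCircle (k + 1) = -1 / (16 * (k : ℝ) ^ 2 * (k + 1) ^ 2) := by
  have hsq : ((-1 : ℝ) ^ (k + 1)) ^ 2 = 1 := by
    rw [← pow_mul, mul_comm, pow_mul, neg_one_sq, one_pow]
  rw [lamCircle_eq hk, lamCircle_eq k.succ_ne_zero, pow_succ _ (k + 1)]
  field_simp
  rw [hsq]
  push_cast
  ring

/-- the sequence `(λ_{2k}^1)_{k ≥ 1}` has alternating signs and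
`|λ_{2k}^1| = Θ(k⁻²)` as `k → ∞`. -/
theorem lamCircle_alternating_and_asymptotics :
    (∀ k : ℕ, 1 ≤ k → lamCircle k * lamCircle (k + 1) < 0) ∧
    ((fun k : ℕ => |lamCircle k|) =Θ[atTop] fun k : ℕ => (k : ℝ) ^ (-2 : ℝ)) := by
  refine ⟨fun k hk => ?_, ?_⟩
  · rw [lamCircle_mul_lamCircle_succ (Nat.one_le_iff_ne_zero.mp hk)]
    exact div_neg_of_neg_of_pos (by norm_num) (by positivity)
  · have habs : (fun k : ℕ => |lamCircle k|) =ᶠ[atTop] fun k => 1 / 4 * (k : ℝ) ^ (-2 : ℝ) := by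
      filter_upwards [eventually_ne_atTop 0] with k hk using abs_lamCircle hk
    exact habs.trans_isTheta ((isTheta_const_mul_left (by norm_num)).2 isTheta_rfl)
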